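/- Let X be a normal topological space and let K and L be topological spaces that are homotopy equivalent. Then X belongs to the class α(L) if and only if X belongs to the class α(K). -/

import Mathlib

open Set Topology

universe u v

/-- `e-dim X ≤ K`: `K` is an absolute extensor for `X`, i.e. every continuous map
from a closed subset of `X` into `K` extends continuously over all of `X`. -/
def EDimLE (X : Type u) (K : Type v) [TopologicalSpace X] [TopologicalSpace K] : Prop :=
  ∀ A : Set X, IsClosed A → ∀ f : A → K, Continuous f →
    ∃ g : X → K, Continuous g ∧ ∀ a : A, g a = f a

/-- `X ∈ α(K)`: every continuous map from a closed subset `A` of `X` into `K` that extends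
continuously over some open neighborhood of `A` extends continuously over all of `X`. -/
def MemAlpha (X : Type u) (K : Type v) [TopologicalSpace X] [TopologicalSpace K] : Prop :=
  ∀ A : Set X, IsClosed A → ∀ f : A → K, Continuous f →
    (∃ U : Set X, IsOpen U ∧ ∃ hAU : A ⊆ U, ∃ g : U → K, Continuous g ∧
      ∀ a : A, g ⟨a.1, hAU a.2⟩ = f a) →
    ∃ h : X → K, Continuous h ∧ ∀ a : A, h a = f a

/-- An open cover of `X`. -/
def IsOpenCover {X : Type u} [TopologicalSpace X] (ω : Set (Set X)) : Prop :=
  (∀ U ∈ ω, IsOpen U) ∧ ⋃₀ ω = univ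

/-- A locally finite open cover of `X`. -/
def IsLocallyFiniteOpenCover {X : Type u} [TopologicalSpace X] (ω : Set (Set X)) : Prop :=
  IsOpenCover ω ∧ LocallyFinite (fun U : ω => (U : Set X))

/-- `f` is an `ω`-map: there is an open cover `γ` of `Y` whose preimages refine `ω`. -/
def IsOmegaMap {X : Type u} {Y : Type v} [TopologicalSpace X] [TopologicalSpace Y]
    (f : X → Y) (ω : Set (Set X)) : Prop :=
  ∃ γ : Set (Set Y), IsOpenCover γ ∧ ∀ G ∈ γ, ∃ W ∈ ω, f ⁻¹' G ⊆ W

/-- `f` and `r` are `γ`-close: each pair `f x`, `r x` lies in a common member of `γ`. -/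
def AreGammaClose {X : Type u} {Y : Type v} (f r : X → Y) (γ : Set (Set Y)) : Prop :=
  ∀ x : X, ∃ G ∈ γ, f x ∈ G ∧ r x ∈ G

/-- A refinable map: a surjective continuous map such that for every locally finite open
cover `ω` of `X` and every open cover `γ` of `Y` there is a surjective `ω`-map `γ`-close
to `r`. -/
def IsRefinable {X : Type u} {Y : Type v} [TopologicalSpace X] [TopologicalSpace Y]
    (r : X → Y) : Prop :=
  Continuous r ∧ Function.Surjective r ∧
    ∀ ω : Set (Set X), IsLocallyFiniteOpenCover ω → ∀ γ : Set (Set Y), IsOpenCover γ →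
      ∃ f : X → Y, Continuous f ∧ Function.Surjective f ∧
        IsOmegaMap f ω ∧ AreGammaClose f r γ

namespace OldCW

open CategoryTheory Limits

/-- The `n`-disk (Mathlib, December 2024: `CWComplex.disk`). -/
noncomputable def disk (n : ℤ) : TopCat.{u} :=
  TopCat.of <| ULift <| Metric.closedBall (0 : EuclideanSpace ℝ <| Fin <| Int.toNat n) 1

/-- The `n`-sphere (Mathlib, December 2024: `CWComplex.sphere`). -/
noncomputable def sphere (n : ℤ) : TopCat.{u} :=
  TopCat.of <| ULift <| Metric.sphere (0 : EuclideanSpace ℝ <| Fin <| Int.toNat n) 1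

/-- The inclusion of the sphere into the disk. -/
noncomputable def sphereInclusion (n : ℤ) : sphere.{u} n ⟶ disk.{u} n :=
  TopCat.ofHom
    { toFun := fun p => ⟨⟨p.down.1, le_of_eq p.down.2⟩⟩
      continuous_toFun := by fun_prop }

/-- Attaching `n`-cells (Mathlib, December 2024: `CWComplex.AttachCells`). -/
structure AttachCells (n : ℤ) (X X' : TopCat.{u}) where
  cells : Type u
  attachMaps : cells → (sphere.{u} n ⟶ X)
  iso_pushout : X' ≅ Limits.pushout (Limits.Sigma.map fun _ : cells ↦ sphereInclusion.{u} n)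
    (Limits.Sigma.desc attachMaps)

/-- Relative CW-complexes (Mathlib, December 2024: `RelativeCWComplex`). -/
structure RelativeCWComplex where
  sk : ℕ → TopCat.{u}
  attachCells (n : ℕ) : OldCW.AttachCells.{u} ((n : ℤ) - 1) (sk n) (sk (n + 1))

/-- CW-complexes (Mathlib, December 2024: `CWComplex`). -/
structure CWComplex extends OldCW.RelativeCWComplex.{u} where
  isEmpty_sk_zero : IsEmpty (sk 0)

/-- The inclusion of a skeleton into the next one. -/
noncomputable def RelativeCWComplex.inclusion (X : OldCW.RelativeCWComplex.{u}) (n : ℕ) :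
    X.sk n ⟶ X.sk (n + 1) :=
  Limits.pushout.inr _ _ ≫ (X.attachCells n).iso_pushout.inv

/-- The sequence of skeleta. -/
noncomputable def RelativeCWComplex.sequence (X : OldCW.RelativeCWComplex.{u}) : ℕ ⥤ TopCat.{u} :=
  Functor.ofSequence X.inclusion

/-- The underlying topological space of a relative CW-complex. -/
noncomputable def RelativeCWComplex.toTopCat (X : OldCW.RelativeCWComplex.{u}) : TopCat.{u} :=
  Limits.colimit X.sequence

end OldCW

/-- `K` (with its topology) carries the structure of a CW-complex. -/
def IsCWComplexSpace (K : Type u) [TopologicalSpace K] : Prop :=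
  ∃ C : OldCW.CWComplex.{u}, Nonempty (K ≃ₜ C.toRelativeCWComplex.toTopCat)

/-- `K` carries the structure of a countable CW-complex (countably many cells). -/
def IsCountableCWComplexSpace (K : Type u) [TopologicalSpace K] : Prop :=
  ∃ C : OldCW.CWComplex.{u}, (∀ n : ℕ, Countable (C.toRelativeCWComplex.attachCells n).cells) ∧
    Nonempty (K ≃ₜ C.toRelativeCWComplex.toTopCat)

/-! Let `e : K ≃ₕ L` and let `f : A → L` extend to `g` on an open `U ⊇ A`. Shrink `U` to a closed
neighbourhood `B` of `A`. The map `e⁻¹ ∘ g` extends from `B` to some `h : X → K` because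
`X ∈ α(K)`, so `e ∘ h` is homotopic on `B` to `e ∘ e⁻¹ ∘ g`, hence to `g`. Running this homotopy
with a Urysohn function as time parameter, equal to `1` on `A` and `0` off the interior of `B`,
deforms `e ∘ h` into a global map that agrees with `g`, hence with `f`, on `A`. -/

open ContinuousMap unitInterval

theorem exists_extension_of_homotopic_restrict {X L : Type*} [TopologicalSpace X] [NormalSpace X]
    [TopologicalSpace L] {A B : Set X} (hA : IsClosed A) (hB : IsClosed B)
    (hAB : A ⊆ interior B) {φ : C(X, L)} {g : C(B, L)} (hφg : (φ.restrict B).Homotopic g) :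
    ∃ ψ : C(X, L), ∀ b : B, b.1 ∈ A → ψ b = g b := by
  classical
  obtain ⟨H⟩ := hφg
  have hBc : IsClosed (interior B)ᶜ := isOpen_interior.isClosed_compl
  obtain ⟨u, hu0, hu1, hu⟩ :=
    exists_continuous_zero_one_of_isClosed hBc hA (disjoint_compl_left.mono_right hAB)
  let t : X → I := fun x => ⟨u x, hu x⟩
  let ψ : X → L := fun x => if hx : x ∈ B then H (t x, ⟨x, hx⟩) else φ x
  have hψ_eq_φ : EqOn ψ φ (interior B)ᶜ := by
    intro x hx
    by_cases hxB : x ∈ B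
    · have ht : t x = 0 := Subtype.ext (hu0 hx)
      simp [ψ, hxB, ht]
    · simp [ψ, hxB]
  have hψB : ContinuousOn ψ B := by
    have : B.domRestrict ψ = fun x : B => H (t x, x) := funext fun x => dif_pos x.2
    rw [continuousOn_iff_continuous_domRestrict, this]
    fun_prop
  have hψ : Continuous ψ := by
    have hcover : B ∪ (interior B)ᶜ = univ :=
      eq_univ_of_subset (union_subset_union_left _ interior_subset) (union_compl_self _)
    rw [← continuousOn_univ, ← hcover]
    exact hψB.union_of_isClosed (φ.continuous.continuousOn.congr hψ_eq_φ) hB hBc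
  refine ⟨⟨ψ, hψ⟩, fun b hb => ?_⟩
  have ht : t b = 1 := Subtype.ext (hu1 hb)
  simp [ψ, ht]

theorem MemAlpha.of_homotopyEquiv {X : Type u} {K L : Type v} [TopologicalSpace X]
    [NormalSpace X] [TopologicalSpace K] [TopologicalSpace L] (e : K ≃ₕ L)
    (hK : MemAlpha X K) : MemAlpha X L := by
  rintro A hA f - ⟨U, hU, hAU, g, hg, hgf⟩
  obtain ⟨V, hV, hAV, hVU⟩ := normal_exists_closure_subset hA hU hAU
  let gB : C(closure V, L) := ⟨fun b => g ⟨b, hVU b.2⟩, by fun_prop⟩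
  obtain ⟨h, hh, hhB⟩ := hK (closure V) isClosed_closure (e.invFun ∘ gB) (by fun_prop)
    ⟨U, hU, hVU, e.invFun ∘ g, by fun_prop, fun _ => rfl⟩
  have hhom : ((e.toFun.comp ⟨h, hh⟩).restrict (closure V)).Homotopic gB := by
    have hrestrict :
        (e.toFun.comp ⟨h, hh⟩).restrict (closure V) = (e.toFun.comp e.invFun).comp gB := by
      ext b
      simp [hhB b]
    rw [hrestrict]
    simpa using e.right_inv.comp (Homotopic.refl gB)
  obtain ⟨ψ, hψ⟩ := exists_extension_of_homotopic_restrict hA isClosed_closure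
    (hAV.trans (interior_maximal subset_closure hV)) hhom
  exact ⟨ψ, ψ.continuous, fun a => (hψ ⟨a, subset_closure (hAV a.2)⟩ a.2).trans (hgf a)⟩

/-- If `K` and `L` are homotopy equivalent spaces and `X` is normal,
then `X ∈ α(L)` iff `X ∈ α(K)`. -/
theorem statement0 {X : Type u} {K L : Type v} [TopologicalSpace X] [NormalSpace X]
    [TopologicalSpace K] [TopologicalSpace L]
    (hKL : Nonempty (ContinuousMap.HomotopyEquiv K L)) :
    MemAlpha X L ↔ MemAlpha X K := by
  obtain ⟨e⟩ := hKL
  exact ⟨MemAlpha.of_homotopyEquiv e.symm, MemAlpha.of_homotopyEquiv e⟩
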